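/- arXiv:q-alg/9609021 — 5 statements merged into one kernel-verified Lean document; each statement's English description precedes it below -/
import Mathlib

section
/- Let $H$ be a complex torus with Lie algebra $\frak{h}$, exponential map $\exp : \frak{h} \to H$ surjective with kernel $L_H$, and let $u : \frak{h} \to \frak{h}$ be a linear map. Define $\Gamma_0 = \{(a,a) : a \in H, a^2 = 1\}$, $\Delta = \{(a,a) : a \in H, a^2 \in \exp u(L_H)\}$, and $\Gamma = \{(\exp x, \exp y) : x, y \in \frak{h}, \exp x = \exp y, x + y = u(y - x)\}$ (diagonal elements of $H \times H$). Then $\Delta = \Gamma \cdot \Gamma_0$. -/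
open scoped Pointwise

/- STATEMENT 1: With `H = 𝔥 ⧸ L_H` a complex torus (quotient of a complex
vector space by the kernel lattice of `exp`), `u : 𝔥 → 𝔥` linear,
`Γ₀ = {(a,a) : a² = 1}`, `Δ = {(a,a) : a² ∈ exp u(L_H)}`,
`Γ = {(exp x, exp y) : exp x = exp y, x + y = u (y - x)}`, one has
`Δ = Γ ⬝ Γ₀` (written additively in the quotient group). -/
theorem stmt_1 {𝔥 : Type*} [AddCommGroup 𝔥] [Module ℂ 𝔥]
    (L : AddSubgroup 𝔥) (u : 𝔥 →ₗ[ℂ] 𝔥)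
    (e : 𝔥 → 𝔥 ⧸ L) (he : e = QuotientAddGroup.mk)
    (Γ₀ Δ Γ : Set ((𝔥 ⧸ L) × (𝔥 ⧸ L)))
    (hΓ₀ : Γ₀ = {p | ∃ a : 𝔥 ⧸ L, p = (a, a) ∧ a + a = 0})
    (hΔ : Δ = {p | ∃ a : 𝔥 ⧸ L, p = (a, a) ∧ ∃ ℓ ∈ L, a + a = e (u ℓ)})
    (hΓ : Γ = {p | ∃ x y : 𝔥, p = (e x, e y) ∧ e x = e y ∧ x + y = u (y - x)}) :
    Δ = Γ + Γ₀ := by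
  subst he hΓ₀ hΔ hΓ
  have hmk : ∀ z : 𝔥, z ∈ L → (QuotientAddGroup.mk z : 𝔥 ⧸ L) = 0 := fun z hz =>
    (QuotientAddGroup.eq_zero_iff z).mpr hz
  ext p
  simp only [Set.mem_add, Set.mem_setOf_eq]
  constructor
  · rintro ⟨a, rfl, ℓ, hℓ, ha⟩
    set x : 𝔥 := (2:ℂ)⁻¹ • (u ℓ - ℓ) with hx
    have hxx : x + x = u ℓ - ℓ := by
      rw [← two_smul ℂ x, hx, smul_smul]
      norm_num
    refine ⟨(QuotientAddGroup.mk x, QuotientAddGroup.mk x),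
      ⟨x, x + ℓ, ?_, ?_, ?_⟩,
      (a - QuotientAddGroup.mk x, a - QuotientAddGroup.mk x), ⟨_, rfl, ?_⟩, ?_⟩
    · have : (QuotientAddGroup.mk (x + ℓ) : 𝔥 ⧸ L) = QuotientAddGroup.mk x := by
        rw [QuotientAddGroup.mk_add, hmk ℓ hℓ, add_zero]
      rw [this]
    · rw [QuotientAddGroup.mk_add, hmk ℓ hℓ, add_zero]
    · have : x + ℓ - x = ℓ := by abel
      rw [this, ← add_assoc, hxx]
      abel
    · have h2x : (QuotientAddGroup.mk x : 𝔥 ⧸ L) + QuotientAddGroup.mk x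
          = QuotientAddGroup.mk (u ℓ) := by
        rw [← QuotientAddGroup.mk_add, hxx]
        have : (QuotientAddGroup.mk (u ℓ - ℓ) : 𝔥 ⧸ L)
            = QuotientAddGroup.mk (u ℓ) - QuotientAddGroup.mk ℓ := by
          rw [← QuotientAddGroup.mk_sub]
        rw [this, hmk ℓ hℓ, sub_zero]
      rw [← h2x] at ha
      calc a - QuotientAddGroup.mk x + (a - QuotientAddGroup.mk x)
          = (a + a) - (QuotientAddGroup.mk x + QuotientAddGroup.mk x) := by abel
        _ = 0 := by rw [ha]; exact sub_self _
    · ext <;> simp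
  · rintro ⟨q, ⟨x, y, rfl, hxy, hsum⟩, r, ⟨b, rfl, hb⟩, rfl⟩
    have hℓ : y - x ∈ L := (QuotientAddGroup.eq_iff_sub_mem.mp hxy.symm)
    refine ⟨QuotientAddGroup.mk x + b, by rw [hxy]; rfl, y - x, hℓ, ?_⟩
    have : (QuotientAddGroup.mk x : 𝔥 ⧸ L) + QuotientAddGroup.mk y
        = QuotientAddGroup.mk (u (y - x)) := by
      rw [← QuotientAddGroup.mk_add, hsum]
    calc QuotientAddGroup.mk x + b + (QuotientAddGroup.mk x + b)
        = (QuotientAddGroup.mk x + QuotientAddGroup.mk y) + (b + b)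
          - (QuotientAddGroup.mk y - QuotientAddGroup.mk x) := by abel
      _ = QuotientAddGroup.mk (u (y - x)) := by
          rw [this, hb, ← QuotientAddGroup.mk_sub, hmk _ hℓ]; abel
end

section
/- Let $\frak{h}^*_{\Bbb{Q}}$ be a finite-dimensional $\Bbb{Q}$-vector space inside a complex vector space $\frak{h}^*$, and let $\Phi$ be a $\Bbb{C}$-linear endomorphism of $\frak{h}^*$. Set $\Phi_\pm = \Phi \pm I$ and $\frak{a}^\perp_{\Bbb{Q}} = \{(\lambda, \mu) \in \frak{h}^*_{\Bbb{Q}} \times \frak{h}^*_{\Bbb{Q}} : \Phi_+\lambda + \Phi_-\mu = 0\}$. Then the map $\nu \mapsto (-\Phi_-\nu, \Phi_+\nu)$ defines a $\Bbb{Q}$-linear isomorphism from $\{\nu \in \frak{h}^*_{\Bbb{Q}} : \Phi\nu \in \frak{h}^*_{\Bbb{Q}}\}$ onto $\frak{a}^\perp_{\Bbb{Q}}$. -/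
/- STATEMENT 2: `𝔥* = ℂ ⊗ 𝔥*_ℚ` with a ℚ-structure `W`, `Φ` a ℂ-linear
endomorphism, `Φ± = Φ ± I`.  The map `ν ↦ (-Φ₋ν, Φ₊ν)` is a (ℚ-linear)
bijection from `{ν ∈ W : Φν ∈ W}` onto
`𝔞⊥_ℚ = {(λ,μ) ∈ W × W : Φ₊λ + Φ₋μ = 0}`. -/
theorem stmt_2 {V : Type*} [AddCommGroup V] [Module ℚ V] [Module ℂ V]
    [IsScalarTower ℚ ℂ V] (W : Submodule ℚ V) [FiniteDimensional ℚ W]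
    (Φ : V →ₗ[ℂ] V) :
    Set.BijOn (fun ν : V => ((-(Φ ν - ν), Φ ν + ν) : V × V))
      {ν : V | ν ∈ W ∧ Φ ν ∈ W}
      {p : V × V | p.1 ∈ W ∧ p.2 ∈ W ∧ (Φ p.1 + p.1) + (Φ p.2 - p.2) = 0} := by
  refine ⟨?_, ?_, ?_⟩
  · rintro ν ⟨h1, h2⟩
    refine ⟨neg_mem (sub_mem h2 h1), add_mem h2 h1, ?_⟩
    simp only [map_neg, map_sub, map_add]
    abel
  · rintro ν₁ ⟨h1, h2⟩ ν₂ ⟨h3, h4⟩ heq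
    have e1 : ν₁ - Φ ν₁ = ν₂ - Φ ν₂ := by
      have := congrArg Prod.fst heq
      simpa using this
    have e2 : Φ ν₁ + ν₁ = Φ ν₂ + ν₂ := congrArg Prod.snd heq
    have key : (2 : ℚ) • ν₁ = (2 : ℚ) • ν₂ := by
      rw [two_smul, two_smul]
      calc ν₁ + ν₁ = (ν₁ - Φ ν₁) + (Φ ν₁ + ν₁) := by abel
        _ = (ν₂ - Φ ν₂) + (Φ ν₂ + ν₂) := by rw [e1, e2]
        _ = ν₂ + ν₂ := by abel
    exact smul_right_injective V (two_ne_zero) key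
  · rintro ⟨l, m⟩ ⟨h1, h2, h3⟩
    have h3' : Φ l + l + (Φ m - m) = 0 := h3
    have hsum : Φ l + Φ m = m - l := by
      have h : (Φ l + Φ m) - (m - l) = 0 := by rw [← h3']; abel
      exact sub_eq_zero.mp h
    have hΦ : Φ ((2 : ℚ)⁻¹ • (l + m)) = (2 : ℚ)⁻¹ • (m - l) := by
      rw [LinearMap.map_smul_of_tower, map_add, hsum]
    refine ⟨(2 : ℚ)⁻¹ • (l + m), ⟨Submodule.smul_mem _ _ (add_mem h1 h2), ?_⟩, ?_⟩
    · rw [hΦ]; exact Submodule.smul_mem _ _ (sub_mem h2 h1)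
    · simp only [Prod.mk.injEq, hΦ]
      constructor
      · module
      · module
end

section
/- Let $A$ be an $\bold{L}$-bigraded Hopf algebra over a field $\Bbb{K}$ and $p$ an antisymmetric bicharacter on $\bold{L}$. Then the twisted multiplication $a \cdot b = p(\lambda,\lambda')p(\mu,\mu')^{-1} ab$ (for homogeneous $a \in A_{\lambda,\mu}$, $b \in A_{\lambda',\mu'}$) together with the original unit, counit, comultiplication and antipode makes $A_p = (A, i, m_p, \epsilon, \Delta, S)$ into an $\bold{L}$-bigraded Hopf algebra. In particular, the counit $\epsilon$ and the comultiplication $\Delta$ are algebra homomorphisms for the new product, and $S$ remains an antipode. -/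
open TensorProduct

/-- The multiplication induced on `A ⊗ A` by a bilinear multiplication on `A`:
`(a ⊗ b)(c ⊗ d) = (ac) ⊗ (bd)`. -/
noncomputable def tsqMul {K A : Type*} [Field K] [AddCommGroup A] [Module K A]
    (mul : A →ₗ[K] A →ₗ[K] A) :
    (A ⊗[K] A) ⊗[K] (A ⊗[K] A) →ₗ[K] A ⊗[K] A :=
  (TensorProduct.map (TensorProduct.lift mul) (TensorProduct.lift mul)).comp
    (TensorProduct.tensorTensorTensorComm K A A A A).toLinearMap

/-- An `L`-bigraded Hopf algebra over `K`, given by explicit structure maps: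
a multiplication, unit, counit, comultiplication, antipode, and an internal
`L × L`-grading satisfying the compatibilities (1)-(4) of the paper. -/
structure LBigradedHopf (K L A : Type*) [Field K] [AddCommGroup L]
    [DecidableEq L] [AddCommGroup A] [Module K A] where
  mul : A →ₗ[K] A →ₗ[K] A
  one : A
  counit : A →ₗ[K] K
  comul : A →ₗ[K] A ⊗[K] A
  antipode : A →ₗ[K] A
  grade : L × L → Submodule K A
  mul_assoc' : ∀ a b c, mul (mul a b) c = mul a (mul b c)
  one_mul' : ∀ a, mul one a = a
  mul_one' : ∀ a, mul a one = a
  internal : DirectSum.IsInternal grade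
  one_mem : one ∈ grade 0
  mul_mem : ∀ i j : L × L, ∀ a ∈ grade i, ∀ b ∈ grade j, mul a b ∈ grade (i + j)
  coassoc : ∀ a, TensorProduct.map LinearMap.id comul (comul a) =
    (TensorProduct.assoc K A A A) (TensorProduct.map comul LinearMap.id (comul a))
  counit_left : ∀ a,
    (TensorProduct.lid K A) (TensorProduct.map counit LinearMap.id (comul a)) = a
  counit_right : ∀ a,
    (TensorProduct.rid K A) (TensorProduct.map LinearMap.id counit (comul a)) = a
  counit_one : counit one = 1
  counit_mul : ∀ a b, counit (mul a b) = counit a * counit b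
  comul_one : comul one = one ⊗ₜ[K] one
  comul_mul : ∀ a b, comul (mul a b) = tsqMul mul (comul a ⊗ₜ[K] comul b)
  antipode_left : ∀ a,
    TensorProduct.lift mul (TensorProduct.map antipode LinearMap.id (comul a)) =
      counit a • one
  antipode_right : ∀ a,
    TensorProduct.lift mul (TensorProduct.map LinearMap.id antipode (comul a)) =
      counit a • one
  comul_grade : ∀ i : L × L, ∀ a ∈ grade i, comul a ∈
    ⨆ ν : L, LinearMap.range
      (TensorProduct.map (grade (i.1, ν)).subtype (grade (-ν, i.2)).subtype)
  counit_grade : ∀ i : L × L, i.1 ≠ -i.2 → ∀ a ∈ grade i, counit a = 0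
  antipode_grade : ∀ i : L × L, ∀ a ∈ grade i, antipode a ∈ grade (i.2, i.1)

/-! Every axiom involving the twisted product is linear in each argument, so it suffices to
check it on homogeneous elements, where it becomes an identity between values of `p`. The twist
factor `σ(i, j) = p(i₁, j₁) p(i₂, j₂)⁻¹` is itself a bicharacter of `L × L`, which gives
associativity and the unit laws. In `Δ(a) Δ(b)` a term `x ⊗ y ⊗ u ⊗ v` with `x ∈ A_{λ,ν}`,
`y ∈ A_{-ν,μ}`, `u ∈ A_{λ',ν'}`, `v ∈ A_{-ν',μ'}` picks up `p(ν, ν')⁻¹ p(-ν, -ν') = 1` besides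
`σ`, so `Δ` stays multiplicative. For the counit and the antipode the surviving factors are
`p(-μ, μ) = p(μ, μ)⁻¹ = 1`, evaluated on the antidiagonal `λ = -μ` where `ε` lives. -/

structure IsBicharacter {L G : Type*} [AddCommGroup L] [CommGroup G] (p : L → L → G) : Prop where
  map_add_left : ∀ a b c, p (a + b) c = p a c * p b c
  map_add_right : ∀ a b c, p a (b + c) = p a b * p a c

namespace IsBicharacter

variable {L G : Type*} [AddCommGroup L] [CommGroup G] {p : L → L → G}

theorem map_zero_left (hp : IsBicharacter p) (b : L) : p 0 b = 1 := by
  simpa using hp.map_add_left 0 0 b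

theorem map_zero_right (hp : IsBicharacter p) (a : L) : p a 0 = 1 := by
  simpa using hp.map_add_right a 0 0

theorem map_neg_left (hp : IsBicharacter p) (a b : L) : p (-a) b = (p a b)⁻¹ :=
  eq_inv_of_mul_eq_one_left <| by rw [← hp.map_add_left, neg_add_cancel, hp.map_zero_left]

theorem map_neg_right (hp : IsBicharacter p) (a b : L) : p a (-b) = (p a b)⁻¹ :=
  eq_inv_of_mul_eq_one_left <| by rw [← hp.map_add_right, neg_add_cancel, hp.map_zero_right]

theorem map_neg_neg (hp : IsBicharacter p) (a b : L) : p (-a) (-b) = p a b := by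
  rw [hp.map_neg_left, hp.map_neg_right, inv_inv]

end IsBicharacter

def twistFactor {L G : Type*} [CommGroup G] (p : L → L → G) (i j : L × L) : G :=
  p i.1 j.1 * (p i.2 j.2)⁻¹

section TwistFactor

variable {L G : Type*} [AddCommGroup L] [CommGroup G] {p : L → L → G}

theorem isBicharacter_twistFactor (hp : IsBicharacter p) : IsBicharacter (twistFactor p) where
  map_add_left i j k := by
    simp only [twistFactor, Prod.fst_add, Prod.snd_add, hp.map_add_left, mul_inv,
      mul_mul_mul_comm]
  map_add_right i j k := by
    simp only [twistFactor, Prod.fst_add, Prod.snd_add, hp.map_add_right, mul_inv,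
      mul_mul_mul_comm]

theorem twistFactor_neg_self (hp : IsBicharacter p) (a b : L) :
    twistFactor p (-a, a) (-b, b) = 1 := by
  simp [twistFactor, hp.map_neg_neg]

theorem twistFactor_mul_twistFactor_neg (hp : IsBicharacter p) (a b c d ν μ : L) :
    twistFactor p (a, ν) (c, μ) * twistFactor p (-ν, b) (-μ, d) =
      twistFactor p (a, b) (c, d) := by
  simp only [twistFactor, hp.map_neg_neg]
  group

theorem twistFactor_of_fst_neg (hp : IsBicharacter p) (hpp : ∀ l, p l l = 1) (a b ν : L) :
    twistFactor p (ν, a) (-ν, b) = (p a b)⁻¹ := by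
  simp [twistFactor, hp.map_neg_right, hpp]

theorem twistFactor_of_snd_neg (hp : IsBicharacter p) (hpp : ∀ l, p l l = 1) (a b ν : L) :
    twistFactor p (a, ν) (b, -ν) = p a b := by
  simp [twistFactor, hp.map_neg_right, hpp]

end TwistFactor

section TensorGrade

variable {K L A : Type*} [Field K] [AddCommGroup L] [AddCommGroup A] [Module K A]

def tensorGrade (g : L × L → Submodule K A) (i : L × L) : Submodule K (A ⊗[K] A) :=
  ⨆ ν : L, LinearMap.range (TensorProduct.map (g (i.1, ν)).subtype (g (-ν, i.2)).subtype)

theorem eq_of_mem_tensorGrade {M : Type*} [AddCommGroup M] [Module K M]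
    {g : L × L → Submodule K A} {i : L × L} {F G : A ⊗[K] A →ₗ[K] M}
    (h : ∀ ν, ∀ x ∈ g (i.1, ν), ∀ y ∈ g (-ν, i.2), F (x ⊗ₜ y) = G (x ⊗ₜ y))
    {t : A ⊗[K] A} (ht : t ∈ tensorGrade g i) : F t = G t := by
  have : tensorGrade g i ≤ LinearMap.eqLocus F G := iSup_le fun ν => by
    rw [TensorProduct.range_map_eq_span_tmul, Submodule.span_le]
    rintro _ ⟨x, y, rfl⟩
    exact h ν x x.2 y y.2
  exact this ht

theorem tsqMul_tmul_tmul (mul : A →ₗ[K] A →ₗ[K] A) (x y u v : A) :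
    tsqMul mul ((x ⊗ₜ[K] y) ⊗ₜ[K] (u ⊗ₜ[K] v)) = mul x u ⊗ₜ[K] mul y v := by
  simp [tsqMul]

end TensorGrade

namespace LBigradedHopf

variable {K L A : Type*} [Field K] [AddCommGroup L] [DecidableEq L] [AddCommGroup A]
  [Module K A] (B : LBigradedHopf K L A)

theorem comul_mem_tensorGrade {i : L × L} {a : A} (ha : a ∈ B.grade i) :
    B.comul a ∈ tensorGrade B.grade i :=
  B.comul_grade i a ha

theorem linearMap_ext {M : Type*} [AddCommGroup M] [Module K M] {f g : A →ₗ[K] M}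
    (h : ∀ i, ∀ a ∈ B.grade i, f a = g a) : f = g := by
  refine LinearMap.eqLocus_eq_top.1 (eq_top_iff.2 ?_)
  rw [← B.internal.submodule_iSup_eq_top]
  exact iSup_le fun i a ha => h i a ha

theorem bilinear_ext {M : Type*} [AddCommGroup M] [Module K M] {f g : A →ₗ[K] A →ₗ[K] M}
    (h : ∀ i j, ∀ a ∈ B.grade i, ∀ b ∈ B.grade j, f a b = g a b) : f = g :=
  B.linearMap_ext fun i a ha => B.linearMap_ext fun j b hb => h i j a ha b hb

def IsTwistedMul (σ : L × L → L × L → Kˣ) (mul' : A →ₗ[K] A →ₗ[K] A) : Prop :=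
  ∀ i j : L × L, ∀ a ∈ B.grade i, ∀ b ∈ B.grade j, mul' a b = (σ i j : K) • B.mul a b

theorem eq_neg_of_counit_ne_zero {l m : L} {a : A} (ha : a ∈ B.grade (l, m))
    (hε : B.counit a ≠ 0) : l = -m :=
  not_imp_comm.1 (fun hlm => B.counit_grade (l, m) hlm a ha) hε

namespace IsTwistedMul

variable {B} {σ : L × L → L × L → Kˣ} {mul' : A →ₗ[K] A →ₗ[K] A}

theorem mul_mem (h : B.IsTwistedMul σ mul') {i j : L × L} {a b : A} (ha : a ∈ B.grade i)
    (hb : b ∈ B.grade j) : mul' a b ∈ B.grade (i + j) := by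
  rw [h i j a ha b hb]
  exact Submodule.smul_mem _ _ (B.mul_mem i j a ha b hb)

theorem one_mul (h : B.IsTwistedMul σ mul') (hσ : IsBicharacter σ) (a : A) :
    mul' B.one a = a := by
  suffices mul' B.one = LinearMap.id from LinearMap.congr_fun this a
  refine B.linearMap_ext fun i a ha => ?_
  rw [h 0 i B.one B.one_mem a ha, hσ.map_zero_left, B.one_mul']
  simp

theorem mul_one (h : B.IsTwistedMul σ mul') (hσ : IsBicharacter σ) (a : A) :
    mul' a B.one = a := by
  suffices mul'.flip B.one = LinearMap.id from LinearMap.congr_fun this a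
  refine B.linearMap_ext fun i a ha => ?_
  rw [LinearMap.flip_apply, h i 0 a ha B.one B.one_mem, hσ.map_zero_right, B.mul_one']
  simp

theorem mul_assoc (h : B.IsTwistedMul σ mul') (hσ : IsBicharacter σ) (a b c : A) :
    mul' (mul' a b) c = mul' a (mul' b c) := by
  suffices mul'.compr₂ mul' = (LinearMap.llcomp K A A A).compl₁₂ mul' mul' from
    LinearMap.congr_fun (LinearMap.congr_fun₂ this a b) c
  refine B.bilinear_ext fun i j a ha b hb => B.linearMap_ext fun k c hc => ?_
  simp only [LinearMap.compr₂_apply, LinearMap.compl₁₂_apply, LinearMap.llcomp_apply]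
  rw [h i j a ha b hb, h j k b hb c hc, map_smul, LinearMap.smul_apply, map_smul,
    h (i + j) k _ (B.mul_mem i j a ha b hb) c hc, h i (j + k) a ha _ (B.mul_mem j k b hb c hc),
    smul_smul, smul_smul, B.mul_assoc', ← Units.val_mul, ← Units.val_mul,
    hσ.map_add_left, hσ.map_add_right]
  congr 2
  ac_rfl

variable {p : L → L → Kˣ}

theorem counit_mul (h : B.IsTwistedMul (twistFactor p) mul') (hp : IsBicharacter p) (a b : A) :
    B.counit (mul' a b) = B.counit a * B.counit b := by
  suffices mul'.compr₂ B.counit = (LinearMap.mul K K).compl₁₂ B.counit B.counit from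
    LinearMap.congr_fun₂ this a b
  refine B.bilinear_ext fun ⟨i₁, i₂⟩ ⟨j₁, j₂⟩ a ha b hb => ?_
  simp only [LinearMap.compr₂_apply, LinearMap.compl₁₂_apply, LinearMap.mul_apply']
  rw [h _ _ a ha b hb, map_smul, B.counit_mul, smul_eq_mul]
  by_cases hεa : B.counit a = 0
  · simp [hεa]
  by_cases hεb : B.counit b = 0
  · simp [hεb]
  obtain rfl := B.eq_neg_of_counit_ne_zero ha hεa
  obtain rfl := B.eq_neg_of_counit_ne_zero hb hεb
  rw [twistFactor_neg_self hp, Units.val_one, _root_.one_mul]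

theorem tsqMul_tmul_of_mem (h : B.IsTwistedMul (twistFactor p) mul') (hp : IsBicharacter p)
    {i j : L × L} {t t' : A ⊗[K] A} (ht : t ∈ tensorGrade B.grade i)
    (ht' : t' ∈ tensorGrade B.grade j) :
    tsqMul mul' (t ⊗ₜ t') = ((twistFactor p i j : Kˣ) : K) • tsqMul B.mul (t ⊗ₜ t') := by
  refine eq_of_mem_tensorGrade (F := tsqMul mul' ∘ₗ (TensorProduct.mk K _ _).flip t')
    (G := ((twistFactor p i j : Kˣ) : K) • tsqMul B.mul ∘ₗ (TensorProduct.mk K _ _).flip t')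
    (fun ν x hx y hy => ?_) ht
  refine eq_of_mem_tensorGrade (F := tsqMul mul' ∘ₗ TensorProduct.mk K _ _ (x ⊗ₜ y))
    (G := ((twistFactor p i j : Kˣ) : K) • tsqMul B.mul ∘ₗ TensorProduct.mk K _ _ (x ⊗ₜ y))
    (fun μ u hu v hv => ?_) ht'
  simp only [LinearMap.comp_apply, LinearMap.smul_apply,
    TensorProduct.mk_apply, tsqMul_tmul_tmul]
  rw [h _ _ x hx u hu, h _ _ y hy v hv, smul_tmul_smul, ← Units.val_mul,
    twistFactor_mul_twistFactor_neg hp]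

theorem comul_mul (h : B.IsTwistedMul (twistFactor p) mul') (hp : IsBicharacter p) (a b : A) :
    B.comul (mul' a b) = tsqMul mul' (B.comul a ⊗ₜ B.comul b) := by
  suffices mul'.compr₂ B.comul =
      ((TensorProduct.mk K _ _).compl₁₂ B.comul B.comul).compr₂ (tsqMul mul') from
    LinearMap.congr_fun₂ this a b
  refine B.bilinear_ext fun i j a ha b hb => ?_
  simp only [LinearMap.compr₂_apply, LinearMap.compl₁₂_apply, TensorProduct.mk_apply]
  rw [h i j a ha b hb, map_smul, B.comul_mul,
    h.tsqMul_tmul_of_mem hp (B.comul_mem_tensorGrade ha) (B.comul_mem_tensorGrade hb)]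

theorem antipode_left (h : B.IsTwistedMul (twistFactor p) mul') (hp : IsBicharacter p)
    (hpp : ∀ l, p l l = 1) (a : A) :
    TensorProduct.lift mul' (TensorProduct.map B.antipode LinearMap.id (B.comul a)) =
      B.counit a • B.one := by
  suffices TensorProduct.lift mul' ∘ₗ TensorProduct.map B.antipode LinearMap.id ∘ₗ B.comul =
      B.counit.smulRight B.one from LinearMap.congr_fun this a
  refine B.linearMap_ext fun ⟨l, m⟩ a ha => ?_
  have hconv :
      TensorProduct.lift mul' (TensorProduct.map B.antipode LinearMap.id (B.comul a)) =
      (((p l m)⁻¹ : Kˣ) : K) •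
        TensorProduct.lift B.mul (TensorProduct.map B.antipode LinearMap.id (B.comul a)) := by
    refine eq_of_mem_tensorGrade
      (F := TensorProduct.lift mul' ∘ₗ TensorProduct.map B.antipode LinearMap.id)
      (G := (((p l m)⁻¹ : Kˣ) : K) •
        TensorProduct.lift B.mul ∘ₗ TensorProduct.map B.antipode LinearMap.id)
      (fun ν x hx y hy => ?_) (B.comul_mem_tensorGrade ha)
    simp only [LinearMap.comp_apply, LinearMap.smul_apply, TensorProduct.map_tmul,
      LinearMap.id_apply, TensorProduct.lift.tmul]
    rw [h _ _ _ (B.antipode_grade _ x hx) y hy, twistFactor_of_fst_neg hp hpp]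
  simp only [LinearMap.comp_apply, LinearMap.smulRight_apply]
  rw [hconv, B.antipode_left, smul_smul]
  by_cases hε : B.counit a = 0
  · simp [hε]
  obtain rfl := B.eq_neg_of_counit_ne_zero ha hε
  rw [hp.map_neg_left, hpp, inv_one, inv_one, Units.val_one, _root_.one_mul]

theorem antipode_right (h : B.IsTwistedMul (twistFactor p) mul') (hp : IsBicharacter p)
    (hpp : ∀ l, p l l = 1) (a : A) :
    TensorProduct.lift mul' (TensorProduct.map LinearMap.id B.antipode (B.comul a)) =
      B.counit a • B.one := by
  suffices TensorProduct.lift mul' ∘ₗ TensorProduct.map LinearMap.id B.antipode ∘ₗ B.comul =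
      B.counit.smulRight B.one from LinearMap.congr_fun this a
  refine B.linearMap_ext fun ⟨l, m⟩ a ha => ?_
  have hconv :
      TensorProduct.lift mul' (TensorProduct.map LinearMap.id B.antipode (B.comul a)) =
      ((p l m : Kˣ) : K) •
        TensorProduct.lift B.mul (TensorProduct.map LinearMap.id B.antipode (B.comul a)) := by
    refine eq_of_mem_tensorGrade
      (F := TensorProduct.lift mul' ∘ₗ TensorProduct.map LinearMap.id B.antipode)
      (G := ((p l m : Kˣ) : K) •
        TensorProduct.lift B.mul ∘ₗ TensorProduct.map LinearMap.id B.antipode)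
      (fun ν x hx y hy => ?_) (B.comul_mem_tensorGrade ha)
    simp only [LinearMap.comp_apply, LinearMap.smul_apply, TensorProduct.map_tmul,
      LinearMap.id_apply, TensorProduct.lift.tmul]
    rw [h _ _ x hx _ (B.antipode_grade _ y hy), twistFactor_of_snd_neg hp hpp]
  simp only [LinearMap.comp_apply, LinearMap.smulRight_apply]
  rw [hconv, B.antipode_right, smul_smul]
  by_cases hε : B.counit a = 0
  · simp [hε]
  obtain rfl := B.eq_neg_of_counit_ne_zero ha hε
  rw [hp.map_neg_left, hpp, inv_one, Units.val_one, _root_.one_mul]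

end IsTwistedMul

def twist {p : L → L → Kˣ} (hp : IsBicharacter p) (hpp : ∀ l, p l l = 1)
    {mul' : A →ₗ[K] A →ₗ[K] A} (h : B.IsTwistedMul (twistFactor p) mul') :
    LBigradedHopf K L A :=
  { B with
    mul := mul'
    mul_assoc' := h.mul_assoc (isBicharacter_twistFactor hp)
    one_mul' := h.one_mul (isBicharacter_twistFactor hp)
    mul_one' := h.mul_one (isBicharacter_twistFactor hp)
    mul_mem := fun _ _ _ ha _ hb => h.mul_mem ha hb
    counit_mul := h.counit_mul hp
    comul_mul := h.comul_mul hp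
    antipode_left := h.antipode_left hp hpp
    antipode_right := h.antipode_right hp hpp }

end LBigradedHopf

theorem stmt_7_general {K L A : Type*} [Field K] [AddCommGroup L] [DecidableEq L]
    [AddCommGroup A] [Module K A]
    (B : LBigradedHopf K L A) (p : L → L → Kˣ)
    (hp1 : ∀ a b c, p (a + b) c = p a c * p b c)
    (hp2 : ∀ a b c, p a (b + c) = p a b * p a c)
    (hp3 : ∀ a, p a a = 1)
    (mul' : A →ₗ[K] A →ₗ[K] A)
    (hmul' : ∀ i j : L × L, ∀ a ∈ B.grade i, ∀ b ∈ B.grade j,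
      mul' a b = ((p i.1 j.1 * (p i.2 j.2)⁻¹ : Kˣ) : K) • B.mul a b) :
    ∃ B' : LBigradedHopf K L A, B'.mul = mul' ∧ B'.one = B.one ∧
      B'.counit = B.counit ∧ B'.comul = B.comul ∧
      B'.antipode = B.antipode ∧ B'.grade = B.grade :=
  ⟨B.twist ⟨hp1, hp2⟩ hp3 hmul', rfl, rfl, rfl, rfl, rfl, rfl⟩

theorem stmt_7 {K L A : Type*} [Field K] [AddCommGroup L] [DecidableEq L]
    [AddCommGroup A] [Module K A]
    (B : LBigradedHopf K L A) (p : L → L → Kˣ)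
    (hp1 : ∀ a b c, p (a + b) c = p a c * p b c)
    (hp2 : ∀ a b c, p a (b + c) = p a b * p a c)
    (hp3 : ∀ a, p a a = 1)
    (hp4 : ∀ a b, p a b = p b (-a))
    (mul' : A →ₗ[K] A →ₗ[K] A)
    (hmul' : ∀ i j : L × L, ∀ a ∈ B.grade i, ∀ b ∈ B.grade j,
      mul' a b = ((p i.1 j.1 * (p i.2 j.2)⁻¹ : Kˣ) : K) • B.mul a b) :
    ∃ B' : LBigradedHopf K L A, B'.mul = mul' ∧ B'.one = B.one ∧
      B'.counit = B.counit ∧ B'.comul = B.comul ∧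
      B'.antipode = B.antipode ∧ B'.grade = B.grade :=
  stmt_7_general B p hp1 hp2 hp3 mul' hmul'
end

section
/- Let $\{A, U\}$ be an $\bold{L}$-bigraded dual pair of Hopf algebras over $\Bbb{K}$ with Hopf pairing $\langle\,\mid\,\rangle$, where $U$ is graded by an abelian group $\bold{Q}$ with a homomorphism $\gamma \mapsto \breve{\gamma}$ from $\bold{Q}$ to $\bold{L}$, and $\langle A_{\lambda,\mu} \mid U_{\gamma,\delta}\rangle \neq 0$ only if $\lambda + \mu = \breve{\gamma} + \breve{\delta}$. Let $p$ be an antisymmetric bicharacter on $\bold{L}$. Then the bilinear form $\langle a \mid u\rangle_p = p(\lambda,\breve{\gamma})^{-1} p(\mu,\breve{\delta})^{-1}\langle a \mid u\rangle$ for homogeneous $a \in A_{\lambda,\mu}$, $u \in U_{\gamma,\delta}$ satisfies the multiplicativity axiom: $\langle a \mid u_1 u_2\rangle_p = \sum \langle a_{(1)} \mid u_1\rangle_p \langle a_{(2)} \mid u_2\rangle_p$, where products on the left are taken in $U_{\breve{p}}$ (the twist of $U$) and the coproduct of $A$ is unchanged. -/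
open TensorProduct

/-! Both sides of the multiplicativity axiom are trilinear in `(a, u₁, u₂)`, so it suffices to
check it on homogeneous elements. There `⟨ | ⟩_p` is a rescaling of `⟨ | ⟩`, and the axiom for
`⟨ | ⟩` reduces the claim to one scalar identity per homogeneous summand `a₍₁₎ ⊗ a₍₂₎` of `Δ a`
pairing nontrivially with `u₁ ⊗ u₂`. For such a summand the degree constraints
`λ + ν = γ̆₁ + δ̆₁` and `-ν + μ = γ̆₂ + δ̆₂` collapse that identity to
`p(δ̆₁, γ̆₂) p(γ̆₂, δ̆₁) p(δ̆₁, δ̆₂) p(δ̆₂, δ̆₁) = 1`, which is antisymmetry of `p`. -/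

section Bicharacter

variable {L M : Type*} [AddCommGroup L] [CommGroup M] {p : L → L → M}

theorem bichar_zero_left (hp1 : ∀ a b c, p (a + b) c = p a c * p b c) (b : L) : p 0 b = 1 := by
  simpa using hp1 0 0 b

theorem bichar_zero_right (hp2 : ∀ a b c, p a (b + c) = p a b * p a c) (a : L) : p a 0 = 1 := by
  simpa using hp2 a 0 0

theorem bichar_neg_left (hp1 : ∀ a b c, p (a + b) c = p a c * p b c) (a b : L) :
    p (-a) b = (p a b)⁻¹ :=
  eq_inv_of_mul_eq_one_left (by rw [← hp1, neg_add_cancel, bichar_zero_left hp1])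

theorem bichar_swap (hp2 : ∀ a b c, p a (b + c) = p a b * p a c)
    (hp4 : ∀ a b, p a b = p b (-a)) (a b : L) : p b a = (p a b)⁻¹ :=
  eq_inv_of_mul_eq_one_left (by rw [hp4 a b, ← hp2, add_neg_cancel, bichar_zero_right hp2])

theorem bichar_twist_coeff (hp1 : ∀ a b c, p (a + b) c = p a c * p b c)
    (hp2 : ∀ a b c, p a (b + c) = p a b * p a c) (hp4 : ∀ a b, p a b = p b (-a))
    {γ₁ δ₁ γ₂ δ₂ l ν m : L} (h₁ : l + ν = γ₁ + δ₁) (h₂ : -ν + m = γ₂ + δ₂) :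
    p γ₁ γ₂ * (p δ₁ δ₂)⁻¹ * ((p l (γ₁ + γ₂))⁻¹ * (p m (δ₁ + δ₂))⁻¹) =
      (p l γ₁)⁻¹ * (p ν δ₁)⁻¹ * ((p (-ν) γ₂)⁻¹ * (p m δ₂)⁻¹) := by
  obtain rfl : l = γ₁ + δ₁ - ν := eq_sub_of_add_eq h₁
  obtain rfl : m = ν + (γ₂ + δ₂) := by rw [← h₂]; abel
  simp only [sub_eq_add_neg, hp1, hp2, bichar_neg_left hp1]
  rw [bichar_swap hp2 hp4 δ₂ δ₁, bichar_swap hp2 hp4 γ₂ δ₁]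
  apply Additive.ofMul.injective
  simp only [ofMul_mul, ofMul_inv]
  abel

end Bicharacter

namespace LinearMap

variable {R M N P : Type*} [CommSemiring R] [AddCommMonoid M] [AddCommMonoid N] [AddCommMonoid P]
  [Module R M] [Module R N] [Module R P]

theorem ext_of_iSup_eq_top {ι : Type*} {S : ι → Submodule R M} (hS : ⨆ i, S i = ⊤)
    {f g : M →ₗ[R] P} (h : ∀ i, ∀ x ∈ S i, f x = g x) : f = g :=
  eqLocus_eq_top.mp (eq_top_iff.mpr (hS ▸ iSup_le h))

theorem ext₂_of_iSup_eq_top {ι κ : Type*} {S : ι → Submodule R M} {T : κ → Submodule R N}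
    (hS : ⨆ i, S i = ⊤) (hT : ⨆ j, T j = ⊤) {f g : M →ₗ[R] N →ₗ[R] P}
    (h : ∀ i, ∀ x ∈ S i, ∀ j, ∀ y ∈ T j, f x y = g x y) : f = g :=
  ext_of_iSup_eq_top hS fun i x hx => ext_of_iSup_eq_top hT (h i x hx)

end LinearMap

namespace TensorProduct

variable {R M N P : Type*} [CommSemiring R] [AddCommMonoid M] [AddCommMonoid N] [AddCommMonoid P]
  [Module R M] [Module R N] [Module R P]

theorem eq_of_mem_iSup_range_map {ι : Type*} {S : ι → Submodule R M} {T : ι → Submodule R N}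
    {f g : M ⊗[R] N →ₗ[R] P} (h : ∀ i, ∀ x ∈ S i, ∀ y ∈ T i, f (x ⊗ₜ y) = g (x ⊗ₜ y))
    {t : M ⊗[R] N} (ht : t ∈ ⨆ i, LinearMap.range (map (S i).subtype (T i).subtype)) :
    f t = g t := by
  refine (iSup_le fun i => ?_ : _ ≤ LinearMap.eqLocus f g) ht
  rintro _ ⟨s, rfl⟩
  exact LinearMap.congr_fun (ext' fun x y => h i x x.2 y y.2 :
    f ∘ₗ map (S i).subtype (T i).subtype = g ∘ₗ map (S i).subtype (T i).subtype) s

end TensorProduct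

noncomputable def convMul {K A : Type*} [Field K] [AddCommGroup A] [Module K A]
    (comul : A →ₗ[K] A ⊗[K] A) : (A →ₗ[K] K) →ₗ[K] (A →ₗ[K] K) →ₗ[K] A →ₗ[K] K :=
  (mapBilinear (RingHom.id K) A A K K).compr₂
    (LinearMap.lcomp K K comul ∘ₗ LinearMap.llcomp K (A ⊗[K] A) (K ⊗[K] K) K (LinearMap.mul' K K))

theorem convMul_apply {K A : Type*} [Field K] [AddCommGroup A] [Module K A]
    (comul : A →ₗ[K] A ⊗[K] A) (f g : A →ₗ[K] K) (a : A) :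
    convMul comul f g a = LinearMap.mul' K K (map f g (comul a)) := rfl

section TwistedPairing

variable {K L Q A U : Type*} [Field K] [AddCommGroup L] [DecidableEq L]
  [AddCommGroup Q] [DecidableEq Q] [AddCommGroup A] [Module K A] [AddCommGroup U] [Module K U]
  {BA : LBigradedHopf K L A} {BU : LBigradedHopf K Q U} {br : Q →+ L}
  {pair pairp : A →ₗ[K] U →ₗ[K] K} {p : L → L → Kˣ}

theorem twisted_pairing_tmul
    (hcompat : ∀ (i : L × L) (j : Q × Q), ∀ a ∈ BA.grade i, ∀ u ∈ BU.grade j,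
      pair a u ≠ 0 → i.1 + i.2 = br j.1 + br j.2)
    (hp1 : ∀ a b c, p (a + b) c = p a c * p b c)
    (hp2 : ∀ a b c, p a (b + c) = p a b * p a c)
    (hp4 : ∀ a b, p a b = p b (-a))
    (hpairp : ∀ (i : L × L) (j : Q × Q), ∀ a ∈ BA.grade i, ∀ u ∈ BU.grade j,
      pairp a u = (((p i.1 (br j.1))⁻¹ * (p i.2 (br j.2))⁻¹ : Kˣ) : K) * pair a u)
    {l ν m : L} {j₁ j₂ : Q × Q} {x y : A} {u₁ u₂ : U}
    (hx : x ∈ BA.grade (l, ν)) (hy : y ∈ BA.grade (-ν, m))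
    (hu₁ : u₁ ∈ BU.grade j₁) (hu₂ : u₂ ∈ BU.grade j₂) :
    ((p (br j₁.1) (br j₂.1) * (p (br j₁.2) (br j₂.2))⁻¹ : Kˣ) : K) *
        (((p l (br (j₁ + j₂).1))⁻¹ * (p m (br (j₁ + j₂).2))⁻¹ : Kˣ) : K) *
        (pair x u₁ * pair y u₂) =
      pairp x u₁ * pairp y u₂ := by
  rw [hpairp _ _ x hx u₁ hu₁, hpairp _ _ y hy u₂ hu₂]
  by_cases h₁ : pair x u₁ = 0
  · simp [h₁]
  by_cases h₂ : pair y u₂ = 0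
  · simp [h₂]
  have hcoeff := congrArg Units.val (bichar_twist_coeff hp1 hp2 hp4
    (hcompat _ _ x hx u₁ hu₁ h₁) (hcompat _ _ y hy u₂ hu₂ h₂))
  simp only [Prod.fst_add, Prod.snd_add, map_add] at hcoeff ⊢
  push_cast at hcoeff ⊢
  linear_combination (pair x u₁ * pair y u₂) * hcoeff

theorem twisted_pairing_mul_of_mem
    (hcompat : ∀ (i : L × L) (j : Q × Q), ∀ a ∈ BA.grade i, ∀ u ∈ BU.grade j,
      pair a u ≠ 0 → i.1 + i.2 = br j.1 + br j.2)
    (hpair_mul : ∀ (a : A) (u1 u2 : U), pair a (BU.mul u1 u2) =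
      LinearMap.mul' K K (map (pair.flip u1) (pair.flip u2) (BA.comul a)))
    (hp1 : ∀ a b c, p (a + b) c = p a c * p b c)
    (hp2 : ∀ a b c, p a (b + c) = p a b * p a c)
    (hp4 : ∀ a b, p a b = p b (-a))
    {mulU' : U →ₗ[K] U →ₗ[K] U}
    (hmulU' : ∀ j j' : Q × Q, ∀ u ∈ BU.grade j, ∀ u' ∈ BU.grade j',
      mulU' u u' = ((p (br j.1) (br j'.1) * (p (br j.2) (br j'.2))⁻¹ : Kˣ) : K) • BU.mul u u')
    (hpairp : ∀ (i : L × L) (j : Q × Q), ∀ a ∈ BA.grade i, ∀ u ∈ BU.grade j,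
      pairp a u = (((p i.1 (br j.1))⁻¹ * (p i.2 (br j.2))⁻¹ : Kˣ) : K) * pair a u)
    {i : L × L} {j₁ j₂ : Q × Q} {a : A} {u₁ u₂ : U}
    (ha : a ∈ BA.grade i) (hu₁ : u₁ ∈ BU.grade j₁) (hu₂ : u₂ ∈ BU.grade j₂) :
    pairp a (mulU' u₁ u₂) = convMul BA.comul (pairp.flip u₁) (pairp.flip u₂) a := by
  rw [hmulU' j₁ j₂ u₁ hu₁ u₂ hu₂, map_smul,
    hpairp i (j₁ + j₂) a ha _ (BU.mul_mem _ _ _ hu₁ _ hu₂), hpair_mul, smul_eq_mul, ← mul_assoc,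
    convMul_apply]
  refine TensorProduct.eq_of_mem_iSup_range_map
    (f := (_ : K) • LinearMap.mul' K K ∘ₗ map (pair.flip u₁) (pair.flip u₂))
    (g := LinearMap.mul' K K ∘ₗ map (pairp.flip u₁) (pairp.flip u₂))
    (fun ν x hx y hy => ?_) (BA.comul_grade i a ha)
  simpa using twisted_pairing_tmul hcompat hp1 hp2 hp4 hpairp hx hy hu₁ hu₂

end TwistedPairing

theorem stmt_9_general {K L Q A U : Type*} [Field K] [AddCommGroup L] [DecidableEq L]
    [AddCommGroup Q] [DecidableEq Q]
    [AddCommGroup A] [Module K A] [AddCommGroup U] [Module K U]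
    (BA : LBigradedHopf K L A) (BU : LBigradedHopf K Q U)
    (br : Q →+ L)
    (pair : A →ₗ[K] U →ₗ[K] K)
    (hcompat : ∀ (i : L × L) (j : Q × Q), ∀ a ∈ BA.grade i, ∀ u ∈ BU.grade j,
      pair a u ≠ 0 → i.1 + i.2 = br j.1 + br j.2)
    (hpair_mul : ∀ (a : A) (u1 u2 : U), pair a (BU.mul u1 u2) =
      LinearMap.mul' K K
        (TensorProduct.map (pair.flip u1) (pair.flip u2) (BA.comul a)))
    (p : L → L → Kˣ)
    (hp1 : ∀ a b c, p (a + b) c = p a c * p b c)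
    (hp2 : ∀ a b c, p a (b + c) = p a b * p a c)
    (hp4 : ∀ a b, p a b = p b (-a))
    (mulU' : U →ₗ[K] U →ₗ[K] U)
    (hmulU' : ∀ j j' : Q × Q, ∀ u ∈ BU.grade j, ∀ u' ∈ BU.grade j',
      mulU' u u' =
        ((p (br j.1) (br j'.1) * (p (br j.2) (br j'.2))⁻¹ : Kˣ) : K) •
          BU.mul u u')
    (pairp : A →ₗ[K] U →ₗ[K] K)
    (hpairp : ∀ (i : L × L) (j : Q × Q), ∀ a ∈ BA.grade i, ∀ u ∈ BU.grade j,
      pairp a u = (((p i.1 (br j.1))⁻¹ * (p i.2 (br j.2))⁻¹ : Kˣ) : K) *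
        pair a u) :
    ∀ (a : A) (u1 u2 : U), pairp a (mulU' u1 u2) =
      LinearMap.mul' K K
        (TensorProduct.map (pairp.flip u1) (pairp.flip u2) (BA.comul a)) := by
  have hconv : mulU'.compr₂ pairp.flip = (convMul BA.comul).compl₁₂ pairp.flip pairp.flip :=
    LinearMap.ext₂_of_iSup_eq_top BU.internal.submodule_iSup_eq_top
      BU.internal.submodule_iSup_eq_top fun _ _ hu₁ _ _ hu₂ =>
        LinearMap.ext_of_iSup_eq_top BA.internal.submodule_iSup_eq_top fun _ _ ha =>
          twisted_pairing_mul_of_mem hcompat hpair_mul hp1 hp2 hp4 hmulU' hpairp ha hu₁ hu₂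
  intro a u1 u2
  exact LinearMap.congr_fun (LinearMap.congr_fun₂ hconv u1 u2) a

theorem stmt_9 {K L Q A U : Type*} [Field K] [AddCommGroup L] [DecidableEq L]
    [AddCommGroup Q] [DecidableEq Q]
    [AddCommGroup A] [Module K A] [AddCommGroup U] [Module K U]
    (BA : LBigradedHopf K L A) (BU : LBigradedHopf K Q U)
    (br : Q →+ L)
    (pair : A →ₗ[K] U →ₗ[K] K)
    (hcompat : ∀ (i : L × L) (j : Q × Q), ∀ a ∈ BA.grade i, ∀ u ∈ BU.grade j,
      pair a u ≠ 0 → i.1 + i.2 = br j.1 + br j.2)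
    (hpair_one : ∀ a, pair a BU.one = BA.counit a)
    (hpair_mul : ∀ (a : A) (u1 u2 : U), pair a (BU.mul u1 u2) =
      LinearMap.mul' K K
        (TensorProduct.map (pair.flip u1) (pair.flip u2) (BA.comul a)))
    (p : L → L → Kˣ)
    (hp1 : ∀ a b c, p (a + b) c = p a c * p b c)
    (hp2 : ∀ a b c, p a (b + c) = p a b * p a c)
    (hp3 : ∀ a, p a a = 1)
    (hp4 : ∀ a b, p a b = p b (-a))
    (mulU' : U →ₗ[K] U →ₗ[K] U)
    (hmulU' : ∀ j j' : Q × Q, ∀ u ∈ BU.grade j, ∀ u' ∈ BU.grade j',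
      mulU' u u' =
        ((p (br j.1) (br j'.1) * (p (br j.2) (br j'.2))⁻¹ : Kˣ) : K) •
          BU.mul u u')
    (pairp : A →ₗ[K] U →ₗ[K] K)
    (hpairp : ∀ (i : L × L) (j : Q × Q), ∀ a ∈ BA.grade i, ∀ u ∈ BU.grade j,
      pairp a u = (((p i.1 (br j.1))⁻¹ * (p i.2 (br j.2))⁻¹ : Kˣ) : K) *
        pair a u) :
    ∀ (a : A) (u1 u2 : U), pairp a (mulU' u1 u2) =
      LinearMap.mul' K K
        (TensorProduct.map (pairp.flip u1) (pairp.flip u2) (BA.comul a)) :=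
  stmt_9_general BA BU br pair hcompat hpair_mul p hp1 hp2 hp4 mulU' hmulU' pairp hpairp
end

section
/- Let $\frak{h}^*_{\Bbb{Q}}$ be a finite-dimensional $\Bbb{Q}$-vector space with a nondegenerate symmetric bilinear form $(-,-)$ taking rational values, $\bold{L} \subset \frak{h}^*_{\Bbb{Q}}$ a subgroup, and $\Phi$ a $\Bbb{C}$-linear endomorphism of the complexification $\frak{h}^*$ such that the form $u(\lambda,\mu) = (\Phi\lambda,\mu)$ is alternating (i.e. $(\Phi\lambda,\lambda)=0$ for all $\lambda$). Let $\hbar \in \Bbb{C}$ with $\hbar \notin i\pi\Bbb{Q}$, and set $\Phi_- = \Phi - I$. Define $\bold{K} = \{\lambda \in \bold{L} : (\Phi_-\lambda, \mu) \in \frac{4i\pi}{\hbar}\Bbb{Z} \text{ for all } \mu \in \bold{L}\}$. Assume additionally that the form $(-,-)$ is anisotropic on $\bold{L}$ (i.e. $(\lambda,\lambda) = 0$ with $\lambda \in \bold{L}$ implies $\lambda = 0$, as holds for a positive-definite form) and that $\bold{L}$ spans $\frak{h}^*_{\Bbb{Q}}$. Then $\bold{K} = 0$. -/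
open Complex

/- STATEMENT 12 (Proposition `Kprop`): `V = ℂ ⊗ 𝔥*_ℚ` with rational structure
`W`, rational-valued nondegenerate symmetric bilinear form `B`, `Lat ⊆ W` a
subgroup spanning `W` on which the form is anisotropic, `Φ` ℂ-linear with
`B(Φλ, λ) = 0` (the form `u(λ,μ) = B(Φλ,μ)` is alternating), and
`ℏ ∉ iπℚ`.  Then `𝐊 = {λ ∈ Lat : B((Φ-I)λ, μ) ∈ (4iπ/ℏ)ℤ for all μ ∈ Lat}`
is zero. -/
theorem stmt_12 {V : Type*} [AddCommGroup V] [Module ℚ V] [Module ℂ V]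
    [IsScalarTower ℚ ℂ V] (W : Submodule ℚ V) [FiniteDimensional ℚ W]
    (B : V →ₗ[ℂ] V →ₗ[ℂ] ℂ)
    (hsymm : ∀ x y, B x y = B y x)
    (hrat : ∀ x ∈ W, ∀ y ∈ W, ∃ q : ℚ, B x y = (q : ℂ))
    (hnd : ∀ x ∈ W, (∀ y ∈ W, B x y = 0) → x = 0)
    (Lat : AddSubgroup V) (hLW : ∀ x ∈ Lat, x ∈ W)
    (hspan : Submodule.span ℚ (Lat : Set V) = W)
    (haniso : ∀ x ∈ Lat, B x x = 0 → x = 0)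
    (Φ : V →ₗ[ℂ] V) (halt : ∀ x, B (Φ x) x = 0)
    (ℏ : ℂ) (hℏ : ∀ q : ℚ, ℏ ≠ (q : ℂ) * (Real.pi * I)) :
    ∀ l ∈ Lat, (∀ m ∈ Lat, ∃ k : ℤ, B (Φ l - l) m = 4 * Real.pi * I / ℏ * k) →
      l = 0 := by
  intro l hl h
  obtain ⟨k, hk⟩ := h l hl
  obtain ⟨q, hq⟩ := hrat l (hLW l hl) l (hLW l hl)
  have hℏ0 : ℏ ≠ 0 := by
    have := hℏ 0; simpa using this
  have hpi : (4 * (Real.pi : ℂ) * I) ≠ 0 := by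
    simp [Real.pi_ne_zero, I_ne_zero, Complex.ext_iff]
  have hBll : B l l = -(4 * Real.pi * I / ℏ * k) := by
    have h2 : B (Φ l) l - B l l = 4 * Real.pi * I / ℏ * k := by
      simpa [map_sub] using hk
    rw [halt l] at h2
    linear_combination -h2
  by_cases hk0 : (k : ℂ) = 0
  · exact haniso l hl (by rw [hBll, hk0]; ring)
  · exfalso
    by_cases hq0 : q = 0
    · have h0 : 4 * (Real.pi : ℂ) * I / ℏ * k = 0 := by
        have : (0:ℂ) = -(4 * Real.pi * I / ℏ * k) := by rw [← hBll, hq, hq0]; norm_num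
        linear_combination this
      rcases mul_eq_zero.1 h0 with h1 | h1
      · exact hpi (by field_simp at h1; simpa using h1)
      · exact hk0 h1
    · apply hℏ (-4 * k / q)
      have hqc : (q : ℂ) ≠ 0 := by exact_mod_cast hq0
      have hm : (q : ℂ) * ℏ = -(4 * Real.pi * I * k) := by
        have h3 := hBll
        rw [hq] at h3
        field_simp at h3
        linear_combination h3
      rw [show ((-4 * k / q : ℚ) : ℂ) = (-4 * k) / q by push_cast; ring,
        div_mul_eq_mul_div, eq_div_iff hqc]
      linear_combination hm
end
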